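/- Let G be a finite DAG with weights in a commutative ring and let b⟨u,v⟩ be a 'block': every intermediate vertex on any path from u to v has all its in-neighbors and out-neighbors among the vertices of paths from u to v. If G' is obtained by deleting all vertices and edges strictly inside the block and adding a single edge u→v with weight equal to Σ_{paths p: u→v in the block} Π_{e∈p} c(e), then for any source y and sink x of G whose connecting paths do not use interior block vertices except via the block, pathSum_{G'}(y,x) = pathSum_G(y,x). -/

import Mathlib

open scoped Classical

def IsPath {V : Type*} (E : V → V → Prop) (u v : V) (l : List V) : Prop :=
  l ≠ [] ∧ l.Chain' E ∧ l.head? = some u ∧ l.getLast? = some v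

def pathWeight {V R : Type*} [CommRing R] (c : V → V → R) (l : List V) : R :=
  ((l.zip l.tail).map fun p => c p.1 p.2).prod

noncomputable def pathSum {V R : Type*} [CommRing R] (E : V → V → Prop) (c : V → V → R)
    (u v : V) : R :=
  ∑ᶠ l ∈ {l : List V | IsPath E u v l}, pathWeight c l

/-!
Both path sums satisfy the first-step recursion `P(a) = [a = x] + ∑_{a → b} c(a,b) P(b)`,
valid in any finite acyclic graph, so they agree at every vertex outside the interior of the
block, by induction along the (still acyclic) collapsed graph. Away from `u` the two recursions
coincide, since by the closure property the only way into the interior is through `u`. By the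
same property, every path from an interior vertex `b` to `x` leaves the block through `v`, so
`pathSum(b, x) = pathSum(b, v) * pathSum(v, x)`; summed over the edges `u → b` into the block,
this is the contribution `pathSum(u, v) * pathSum(v, x)` of the new edge `u → v`.
-/

open Relation

section Paths

variable {V R : Type*} [CommRing R] {F : V → V → Prop}

lemma isPath_iff_isChain {u v : V} {l : List V} :
    IsPath F u v l ↔ l ≠ [] ∧ l.IsChain F ∧ l.head? = some u ∧ l.getLast? = some v :=
  Iff.rfl

@[simp]
lemma pathWeight_singleton (c : V → V → R) (a : V) : pathWeight c [a] = 1 := by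
  simp [pathWeight]

@[simp]
lemma pathWeight_cons_cons (c : V → V → R) (a b : V) (t : List V) :
    pathWeight c (a :: b :: t) = c a b * pathWeight c (b :: t) := by
  simp [pathWeight]

lemma isPath_iff {a x : V} {l : List V} :
    IsPath F a x l ↔
      (l = [a] ∧ a = x) ∨ ∃ b t, F a b ∧ IsPath F b x t ∧ l = a :: t := by
  rcases l with _ | ⟨a', _ | ⟨b, t⟩⟩
  · simp [isPath_iff_isChain]
  · simp only [isPath_iff_isChain]
    grind
  · simp only [isPath_iff_isChain, List.isChain_cons_cons]
    grind

lemma IsPath.reflTransGen_of_mem {u v a : V} {l : List V} (hl : IsPath F u v l) (ha : a ∈ l) :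
    ReflTransGen F u a ∧ ReflTransGen F a v := by
  obtain ⟨hne, hchain, hhead, hlast⟩ := hl
  refine ⟨hchain.induction (ReflTransGen F u) l (fun _ _ h₁ h₂ => h₂.tail h₁) ?_ a ha,
    hchain.backwards_induction (ReflTransGen F · v) l (fun _ _ h₁ h₂ => h₂.head h₁) ?_ a
      ha⟩
  · intro hne
    rw [(List.head_eq_iff_head?_eq_some hne).mpr hhead]
  · intro hne
    rw [(List.getLast_eq_iff_getLast?_eq_some hne).mpr hlast]

lemma IsPath.nodup (hF : ∀ a, ¬ TransGen F a a) {u v : V} {l : List V} (hl : IsPath F u v l) :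
    l.Nodup := by
  have : l.Pairwise (TransGen F) :=
    List.isChain_iff_pairwise.mp (hl.2.1.imp fun _ _ => TransGen.single)
  exact this.imp (S := (· ≠ ·)) fun h e => hF _ (e ▸ h)

lemma finite_setOf_isPath [Fintype V] (hF : ∀ a, ¬ TransGen F a a) (u v : V) :
    {l | IsPath F u v l}.Finite :=
  (List.finite_length_le V (Fintype.card V)).subset fun _ hl => (hl.nodup hF).length_le_card

lemma setOf_isPath_eq (a x : V) :
    {l | IsPath F a x l} =
      {l | l = [a] ∧ a = x} ∪ ⋃ b ∈ {b | F a b}, List.cons a '' {l | IsPath F b x l} := by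
  ext l
  simp only [Set.mem_ofPred_eq, Set.mem_union, Set.mem_iUnion, Set.mem_image, exists_prop,
    isPath_iff (l := l)]
  grind

lemma pathSum_eq_zero {a b : V} (c : V → V → R) (h : ∀ l, ¬ IsPath F a b l) :
    pathSum F c a b = 0 := by
  simp [pathSum, h]

lemma finsum_mem_image_cons (c : V → V → R) {b x : V} (hfin : {l | IsPath F b x l}.Finite)
    (a : V) :
    ∑ᶠ l ∈ List.cons a '' {l | IsPath F b x l}, pathWeight c l = c a b * pathSum F c b x := by
  rw [finsum_mem_image List.cons_injective.injOn, pathSum, mul_finsum_mem' _ _ hfin]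
  refine finsum_mem_congr rfl fun t ht => ?_
  obtain ⟨t', rfl⟩ := List.head?_eq_some_iff.mp ht.2.2.1
  exact pathWeight_cons_cons c a b t'

theorem pathSum_eq_ite_add_sum [Fintype V] (hF : ∀ a, ¬ TransGen F a a) (c : V → V → R)
    (a x : V) : pathSum F c a x =
      (if a = x then 1 else 0) + ∑ b, if F a b then c a b * pathSum F c b x else 0 := by
  have hfin := finite_setOf_isPath hF (V := V)
  rw [pathSum, setOf_isPath_eq, finsum_mem_union, finsum_mem_biUnion]
  · congr 1
    · by_cases hax : a = x <;> simp [hax]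
    · rw [finsum_mem_def, finsum_eq_sum_of_fintype]
      refine Finset.sum_congr rfl fun b _ => ?_
      simp only [Set.indicator_apply, Set.mem_ofPred_eq, finsum_mem_image_cons c (hfin b x)]
  · rintro b - b' - hbb'
    refine Set.disjoint_left.mpr ?_
    rintro _ ⟨t, ht, rfl⟩ ⟨t', ht', he⟩
    obtain rfl := List.cons_injective he
    exact hbb' (Option.some_injective _ (ht.2.2.1.symm.trans ht'.2.2.1))
  · exact Set.toFinite _
  · exact fun b _ => (hfin b x).image _
  · refine Set.disjoint_left.mpr ?_
    rintro _ ⟨rfl, -⟩ hl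
    simp only [Set.mem_iUnion, Set.mem_image] at hl
    obtain ⟨b, -, t, ht, he⟩ := hl
    exact ht.1 (List.cons_injective he)
  · exact (Set.finite_singleton [a]).subset fun l hl => hl.1
  · exact Set.Finite.biUnion (Set.toFinite _) fun b _ => (hfin b x).image _

lemma pathSum_self [Fintype V] (hF : ∀ a, ¬ TransGen F a a) (c : V → V → R) (a : V) :
    pathSum F c a a = 1 := by
  rw [pathSum_eq_ite_add_sum hF, if_pos rfl, add_eq_left]
  refine Finset.sum_eq_zero fun b _ => ?_
  split_ifs with hab
  · rw [pathSum_eq_zero c fun l hl => hF a ?_, mul_zero]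
    exact TransGen.head' hab (hl.reflTransGen_of_mem (List.mem_of_head? hl.2.2.1)).2
  · rfl

theorem acyclic_induction [Finite V] (hF : ∀ a, ¬ TransGen F a a) {P : V → Prop}
    (step : ∀ a, (∀ b, F a b → P b) → P a) (a : V) : P a := by
  have : IsTrans V (flip (TransGen F)) := ⟨fun _ _ _ h₁ h₂ => h₂.trans h₁⟩
  have : Std.Irrefl (flip (TransGen F)) := ⟨hF⟩
  exact (Finite.wellFounded_of_trans_of_irrefl (flip (TransGen F))).induction a
    fun a ih => step a fun b hab => ih b (TransGen.single hab)

lemma isChain_and_pathWeight_eq_of_ne_zero {F' : V → V → Prop} {c c' : V → V → R}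
    (h : ∀ a b, F a b → c a b ≠ 0 → F' a b ∧ c' a b = c a b) :
    ∀ {l : List V}, l.IsChain F → pathWeight c l ≠ 0 →
      l.IsChain F' ∧ pathWeight c' l = pathWeight c l
  | [], _, _ => ⟨.nil, rfl⟩
  | [_], _, _ => ⟨.singleton _, by simp⟩
  | a :: b :: t, hl, hw => by
    rw [List.isChain_cons_cons] at hl
    rw [pathWeight_cons_cons] at hw
    obtain ⟨hF', hc⟩ := h a b hl.1 (left_ne_zero_of_mul hw)
    obtain ⟨ht, hwt⟩ := isChain_and_pathWeight_eq_of_ne_zero h hl.2 (right_ne_zero_of_mul hw)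
    exact ⟨.cons_cons hF' ht, by rw [pathWeight_cons_cons, pathWeight_cons_cons, hc, hwt]⟩

lemma isPath_and_pathWeight_eq_of_ne_zero {F' : V → V → Prop} {c c' : V → V → R}
    (h : ∀ a b, F a b → c a b ≠ 0 → F' a b ∧ c' a b = c a b) {u v : V} {l : List V}
    (hl : l ∈ {l | IsPath F u v l} ∩ Function.support (pathWeight c)) :
    l ∈ {l | IsPath F' u v l} ∩ Function.support (pathWeight c') ∧
      pathWeight c' l = pathWeight c l := by
  obtain ⟨⟨hne, hchain, hu, hv⟩, hw⟩ := hl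
  obtain ⟨hchain', hw'⟩ := isChain_and_pathWeight_eq_of_ne_zero h hchain hw
  exact ⟨⟨⟨hne, hchain', hu, hv⟩, by rwa [Function.mem_support, hw']⟩, hw'⟩

lemma pathSum_congr_of_ne_zero {F' : V → V → Prop} {c c' : V → V → R}
    (h : ∀ a b, F a b → c a b ≠ 0 → F' a b ∧ c' a b = c a b)
    (h' : ∀ a b, F' a b → c' a b ≠ 0 → F a b ∧ c a b = c' a b) (u v : V) :
    pathSum F' c' u v = pathSum F c u v := by
  rw [pathSum, pathSum, ← finsum_mem_inter_support, ← finsum_mem_inter_support (pathWeight c)]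
  exact finsum_mem_congr
    (Set.Subset.antisymm (fun _ hl => (isPath_and_pathWeight_eq_of_ne_zero h' hl).1)
      (fun _ hl => (isPath_and_pathWeight_eq_of_ne_zero h hl).1))
    fun _ hl => (isPath_and_pathWeight_eq_of_ne_zero h hl).2

end Paths

section Block

variable {V R : Type*} [CommRing R]

def block (E : V → V → Prop) (u v : V) : Set V := {a | ∃ l, IsPath E u v l ∧ a ∈ l}

def BlockClosed (E : V → V → Prop) (u v : V) : Prop :=
  ∀ a ∈ block E u v, a ≠ u → a ≠ v →
    ∀ b, (E a b → b ∈ block E u v) ∧ (E b a → b ∈ block E u v)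

def collapse (E : V → V → Prop) (u v a b : V) : Prop :=
  (E a b ∧ a ∉ block E u v \ {u, v} ∧ b ∉ block E u v \ {u, v} ∧ ¬(a = u ∧ b = v)) ∨
    (a = u ∧ b = v)

noncomputable def collapseWeight (E : V → V → Prop) (c : V → V → R) (u v a b : V) : R :=
  if a = u ∧ b = v then pathSum E c u v else c a b

variable {E : V → V → Prop} {u v a b x y : V}

lemma right_mem_block {l : List V} (hl : IsPath E u v l) : v ∈ block E u v :=
  ⟨l, hl, List.mem_of_getLast? hl.2.2.2⟩

lemma transGen_of_mem_block_left (ha : a ∈ block E u v) (hau : a ≠ u) : TransGen E u a := by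
  obtain ⟨l, hl, hal⟩ := ha
  exact (reflTransGen_iff_eq_or_transGen.mp (hl.reflTransGen_of_mem hal).1).resolve_left hau

lemma transGen_of_mem_block_right (ha : a ∈ block E u v) (hav : a ≠ v) : TransGen E a v := by
  obtain ⟨l, hl, hal⟩ := ha
  exact (reflTransGen_iff_eq_or_transGen.mp (hl.reflTransGen_of_mem hal).2).resolve_left hav.symm

lemma notMem_interior_of_sink (hx : ∀ b, ¬ E x b) : x ∉ block E u v \ {u, v} := by
  rintro ⟨hxB, hxuv⟩
  obtain ⟨b, hxb, -⟩ := TransGen.head'_iff.mp (transGen_of_mem_block_right hxB (by grind))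
  exact hx b hxb

lemma notMem_interior_of_source (hy : ∀ a, ¬ E a y) : y ∉ block E u v \ {u, v} := by
  rintro ⟨hyB, hyuv⟩
  obtain ⟨a, -, hay⟩ := TransGen.tail'_iff.mp (transGen_of_mem_block_left hyB (by grind))
  exact hy a hay

lemma notMem_interior_of_collapse (hab : collapse E u v a b) : b ∉ block E u v \ {u, v} := by
  rcases hab with ⟨-, -, hb, -⟩ | ⟨-, rfl⟩
  · exact hb
  · simp

/-- The collapsed graph may have a cycle through the new edge `u → v`, but that edge has weight
`pathSum E c u v = 0` here. -/
lemma pathSum_collapse_of_forall_not_isPath (h : ∀ l, ¬ IsPath E u v l) (c : V → V → R)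
    (y x : V) : pathSum (collapse E u v) (collapseWeight E c u v) y x = pathSum E c y x := by
  have hB : ∀ a, a ∉ block E u v := fun a ⟨l, hl, _⟩ => h l hl
  have hS : pathSum E c u v = 0 := pathSum_eq_zero c h
  refine pathSum_congr_of_ne_zero (fun a b hab _ => ?_) (fun a b hab hw => ?_) y x
  · have hne : ¬(a = u ∧ b = v) := by
      rintro ⟨rfl, rfl⟩
      exact h [a, b] ⟨by simp, .cons_cons hab (.singleton b), rfl, rfl⟩
    exact ⟨.inl ⟨hab, fun ha => hB a ha.1, fun hb => hB b hb.1, hne⟩, if_neg hne⟩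
  · rcases hab with ⟨hab, -, -, hne⟩ | huv
    · exact ⟨hab, (if_neg hne).symm⟩
    · simp [collapseWeight, huv, hS] at hw

variable (hacyc : ∀ a, ¬ TransGen E a a)
include hacyc

lemma collapse_acyclic (huv : u ≠ v) (hvB : v ∈ block E u v) :
    ∀ a, ¬ TransGen (collapse E u v) a a := by
  have hle : ∀ a b, collapse E u v a b → TransGen E a b := by
    rintro a b (⟨hab, -⟩ | ⟨rfl, rfl⟩)
    · exact .single hab
    · exact transGen_of_mem_block_left hvB huv.symm
  exact fun a ha => hacyc a (ha.lift' id hle)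

lemma collapse_left_iff (hbv : b ≠ v) : collapse E u v u b ↔ E u b ∧ b ∉ block E u v := by
  constructor
  · rintro (⟨hub, -, hbI, -⟩ | ⟨-, hbv'⟩)
    · have hbu : b ≠ u := fun h => hacyc u (.single (h ▸ hub))
      exact ⟨hub, fun hbB => hbI ⟨hbB, by simp [hbu, hbv]⟩⟩
    · exact absurd hbv' hbv
  · rintro ⟨hub, hbB⟩
    exact .inl ⟨hub, fun h => by simp at h, fun h => hbB h.1, fun h => hbv h.2⟩

lemma pathSum_eq_sum_mem_block [Fintype V] (huv : u ≠ v) (c : V → V → R) :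
    pathSum E c u v =
      ∑ b, if E u b ∧ b ∈ block E u v then c u b * pathSum E c b v else 0 := by
  rw [pathSum_eq_ite_add_sum hacyc, if_neg huv, zero_add]
  refine Finset.sum_congr rfl fun b _ => ?_
  by_cases hub : E u b
  · by_cases hbB : b ∈ block E u v
    · simp [hub, hbB]
    · have : ∀ l, ¬ IsPath E b v l := fun l hl =>
        hbB ⟨u :: l, isPath_iff.mpr (.inr ⟨b, l, hub, hl, rfl⟩),
          List.mem_cons_of_mem u (List.mem_of_head? hl.2.2.1)⟩
      simp [hub, hbB, pathSum_eq_zero c this]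
  · simp [hub]

variable (hclosed : BlockClosed E u v)
include hclosed

lemma mem_block_of_rel_of_mem_interior (ha : a ∈ block E u v \ {u, v}) (hab : E a b) :
    b ∈ block E u v ∧ b ≠ u := by
  obtain ⟨haB, hauv⟩ := ha
  refine ⟨(hclosed a haB (by grind) (by grind) b).1 hab, ?_⟩
  rintro rfl
  exact hacyc b ((transGen_of_mem_block_left haB (by grind)).tail hab)

lemma notMem_interior_of_rel (ha : a ∉ block E u v \ {u, v}) (hau : a ≠ u) (hab : E a b) :
    b ∉ block E u v \ {u, v} := by
  rintro ⟨hbB, hbuv⟩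
  have haB : a ∈ block E u v := (hclosed b hbB (by grind) (by grind) a).2 hab
  obtain rfl : a = v := by grind
  exact hacyc a (TransGen.head hab (transGen_of_mem_block_right hbB (by grind)))

lemma collapse_iff_of_ne_left (ha : a ∉ block E u v \ {u, v}) (hau : a ≠ u) :
    collapse E u v a b ↔ E a b := by
  refine ⟨?_, fun hab =>
    .inl ⟨hab, ha, notMem_interior_of_rel hacyc hclosed ha hau hab, ?_⟩⟩
  · rintro (⟨hab, -⟩ | ⟨rfl, -⟩)
    exacts [hab, absurd rfl hau]
  · exact fun h => hau h.1

theorem pathSum_eq_mul_of_mem_block [Fintype V] (c : V → V → R)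
    (hx : x ∉ block E u v \ {u, v}) (a : V) :
    a ∈ block E u v → a ≠ u → pathSum E c a x = pathSum E c a v * pathSum E c v x := by
  induction a using acyclic_induction hacyc with
  | step a ih =>
    intro haB hau
    by_cases hav : a = v
    · rw [hav, pathSum_self hacyc, one_mul]
    have haI : a ∈ block E u v \ {u, v} := ⟨haB, by simp [hau, hav]⟩
    have hax : a ≠ x := fun h => hx (h ▸ haI)
    rw [pathSum_eq_ite_add_sum hacyc c a x, pathSum_eq_ite_add_sum hacyc c a v, if_neg hax,
      if_neg hav, zero_add, zero_add, Finset.sum_mul]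
    refine Finset.sum_congr rfl fun b _ => ?_
    split_ifs with hab
    · obtain ⟨hbB, hbu⟩ := mem_block_of_rel_of_mem_interior hacyc hclosed haI hab
      rw [ih b hab hbB hbu, mul_assoc]
    · rw [zero_mul]

lemma sum_collapse_left_eq_sum [Fintype V] (huv : u ≠ v) (hvB : v ∈ block E u v)
    (c : V → V → R) (hx : x ∉ block E u v \ {u, v}) :
    (∑ b, if collapse E u v u b then collapseWeight E c u v u b * pathSum E c b x else 0) =
      ∑ b, if E u b then c u b * pathSum E c b x else 0 :=
  calc (∑ b, if collapse E u v u b then collapseWeight E c u v u b * pathSum E c b x else 0)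
      = ∑ b, ((if b = v then pathSum E c u v * pathSum E c v x else 0) +
          if E u b ∧ b ∉ block E u v then c u b * pathSum E c b x else 0) := by
        refine Finset.sum_congr rfl fun b _ => ?_
        by_cases hbv : b = v
        · subst b
          simp [collapse, collapseWeight, hvB]
        · simp only [collapse_left_iff hacyc hbv, collapseWeight, hbv, and_false, if_false,
            zero_add]
    _ = pathSum E c u v * pathSum E c v x +
          ∑ b, if E u b ∧ b ∉ block E u v then c u b * pathSum E c b x else 0 := by
        rw [Finset.sum_add_distrib, Finset.sum_ite_eq', if_pos (Finset.mem_univ v)]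
    _ = ∑ b, ((if E u b ∧ b ∈ block E u v then c u b * pathSum E c b v * pathSum E c v x
            else 0) + if E u b ∧ b ∉ block E u v then c u b * pathSum E c b x else 0) := by
        rw [Finset.sum_add_distrib, pathSum_eq_sum_mem_block hacyc huv, Finset.sum_mul]
        simp only [ite_mul, zero_mul]
    _ = ∑ b, if E u b then c u b * pathSum E c b x else 0 := by
        refine Finset.sum_congr rfl fun b _ => ?_
        by_cases hub : E u b
        · have hbu : b ≠ u := fun h => hacyc u (.single (h ▸ hub))
          by_cases hbB : b ∈ block E u v
          · simp [hub, hbB, pathSum_eq_mul_of_mem_block hacyc hclosed c hx b hbB hbu, mul_assoc]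
          · simp [hub, hbB]
        · simp [hub]

lemma sum_collapse_eq_sum [Fintype V] (huv : u ≠ v) (hvB : v ∈ block E u v) (c : V → V → R)
    (hx : x ∉ block E u v \ {u, v}) (ha : a ∉ block E u v \ {u, v}) :
    (∑ b, if collapse E u v a b then collapseWeight E c u v a b * pathSum E c b x else 0) =
      ∑ b, if E a b then c a b * pathSum E c b x else 0 := by
  by_cases hau : a = u
  · subst a
    exact sum_collapse_left_eq_sum hacyc hclosed huv hvB c hx
  · refine Finset.sum_congr rfl fun b _ => ?_
    have hne : ¬(a = u ∧ b = v) := fun h => hau h.1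
    simp only [collapse_iff_of_ne_left hacyc hclosed ha hau, collapseWeight, if_neg hne]

theorem pathSum_collapse_of_notMem_interior [Fintype V] (huv : u ≠ v) (hvB : v ∈ block E u v)
    (c : V → V → R) (hx : x ∉ block E u v \ {u, v}) (a : V)
    (ha : a ∉ block E u v \ {u, v}) :
    pathSum (collapse E u v) (collapseWeight E c u v) a x = pathSum E c a x := by
  induction a using acyclic_induction (collapse_acyclic hacyc huv hvB) with
  | step a ih =>
    rw [pathSum_eq_ite_add_sum (collapse_acyclic hacyc huv hvB), pathSum_eq_ite_add_sum hacyc,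
      ← sum_collapse_eq_sum hacyc hclosed huv hvB c hx ha]
    congr 1
    refine Finset.sum_congr rfl fun b _ => ?_
    split_ifs with hab
    · rw [ih b hab (notMem_interior_of_collapse hab)]
    · rfl

end Block

/-- Collapsing a block: let `B` be the set of vertices on paths from `u` to `v`, and
assume the block closure property (every intermediate vertex of the block has all its
in- and out-neighbours inside `B`).  Replacing the interior of the block by a single edge
`u → v` whose weight is the path sum of the block (added to any pre-existing edge
`u → v`) preserves the path sum from every source `y` to every sink `x`. -/
theorem stmt14 {V R : Type*} [Fintype V] [CommRing R] (E : V → V → Prop)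
    (hacyc : ∀ a : V, ¬ Relation.TransGen E a a) (c : V → V → R)
    (u v : V) (huv : u ≠ v)
    (B : Set V) (hB : B = {a | ∃ l, IsPath E u v l ∧ a ∈ l})
    (hclosed : ∀ a ∈ B, a ≠ u → a ≠ v →
      ∀ b, (E a b → b ∈ B) ∧ (E b a → b ∈ B)) :
    ∀ y x : V, (∀ a, ¬ E a y) → (∀ b, ¬ E x b) →
      pathSum
        (fun a b => (E a b ∧ a ∉ B \ {u, v} ∧ b ∉ B \ {u, v} ∧ ¬(a = u ∧ b = v)) ∨
          (a = u ∧ b = v))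
        (fun a b => if a = u ∧ b = v then pathSum E c u v else c a b) y x
      = pathSum E c y x := by
  intro y x hy hx
  subst hB
  by_cases hpath : ∃ l, IsPath E u v l
  · obtain ⟨l, hl⟩ := hpath
    exact pathSum_collapse_of_notMem_interior hacyc hclosed huv (right_mem_block hl) c
      (notMem_interior_of_sink hx) y (notMem_interior_of_source hy)
  · exact pathSum_collapse_of_forall_not_isPath (not_exists.mp hpath) c y x
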